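/- Let Π be a finite multiset of MSEL_Σ2 formulas containing h ⊗ !^a r_a ⊗ ¬h, h ⊗ !^b r_b ⊗ ¬h, and h ⊗ !^∞ 1. Then for all natural numbers m and n, the MSEL_Σ2 sequent ⊢ ?^∞Π, Δ, ¬h is derivable, where Δ consists of m copies of ?^a ¬r_a and n copies of ?^b ¬r_b. -/
import Mathlib


namespace Msel

/-- Subexponential labels of the signature `Σ₂ = ⟨{∞, a, b}, {∞}, ≤⟩`. -/
inductive Lbl : Type
  | inf  -- the unbounded label ∞
  | la   -- the bounded label a
  | lb   -- the bounded label b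
deriving DecidableEq

/-- The pre-order on labels: the reflexive-transitive closure of `a ≤ ∞` and `b ≤ ∞`. -/
def Lbl.le (u v : Lbl) : Prop := u = v ∨ v = Lbl.inf

/-- A label is unbounded iff it is ∞. -/
def Lbl.unb (u : Lbl) : Prop := u = Lbl.inf

/-- Formulas of multiplicative subexponential logic MSEL_Σ₂.
Atoms are named by natural numbers. -/
inductive Fm : Type
  | atom (p : ℕ)            -- atom p
  | natom (p : ℕ)           -- negated atom ¬p
  | tens (A B : Fm)         -- A ⊗ B
  | one                     -- 1
  | par (A B : Fm)          -- A ⅋ B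
  | bot                     -- ⊥
  | bang (u : Lbl) (A : Fm) -- !^u A
  | qm (u : Lbl) (A : Fm)   -- ?^u A
deriving DecidableEq

/-- The (unfocused) one-sided sequent calculus for MSEL_Σ₂; `Der Γ` means `⊢ Γ` is derivable. -/
inductive Der : Multiset Fm → Prop
  | init (p : ℕ) : Der {Fm.atom p, Fm.natom p}
  | tens {Γ Δ : Multiset Fm} {A B : Fm} :
      Der (A ::ₘ Γ) → Der (B ::ₘ Δ) → Der (Fm.tens A B ::ₘ (Γ + Δ))
  | one : Der {Fm.one}
  | par {Γ : Multiset Fm} {A B : Fm} :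
      Der (A ::ₘ B ::ₘ Γ) → Der (Fm.par A B ::ₘ Γ)
  | bot {Γ : Multiset Fm} : Der Γ → Der (Fm.bot ::ₘ Γ)
  | qm {Γ : Multiset Fm} {A : Fm} {u : Lbl} :
      Der (A ::ₘ Γ) → Der (Fm.qm u A ::ₘ Γ)
  | bang {Γ : Multiset Fm} {C : Fm} {u : Lbl} :
      (∀ F ∈ Γ, ∃ v B, F = Fm.qm v B ∧ Lbl.le u v) →
      Der (C ::ₘ Γ) → Der (Fm.bang u C ::ₘ Γ)
  | weak {Γ : Multiset Fm} {A : Fm} :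
      Der Γ → Der (Fm.qm Lbl.inf A ::ₘ Γ)
  | contr {Γ : Multiset Fm} {A : Fm} :
      Der (Fm.qm Lbl.inf A ::ₘ Fm.qm Lbl.inf A ::ₘ Γ) →
      Der (Fm.qm Lbl.inf A ::ₘ Γ)

/-- Positive formulas: atoms, ⊗, 1, !. -/
def Fm.isPos : Fm → Prop
  | .atom _ => True
  | .tens _ _ => True
  | .one => True
  | .bang _ _ => True
  | _ => False

/-- Negative formulas: negated atoms, ⅋, ⊥, ?. -/
def Fm.isNeg : Fm → Prop
  | .natom _ => True
  | .par _ _ => True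
  | .bot => True
  | .qm _ _ => True
  | _ => False

/-- Neutral formulas: positive formulas, atoms, negated atoms and ?-formulas
(i.e. everything except ⅋ and ⊥). -/
def Fm.isNeutral : Fm → Prop
  | .par _ _ => False
  | .bot => False
  | _ => True

/-- The focused sequent calculus for MSEL_Σ₂.
`FDer Γ none` is the unfocused sequent `⊢ Γ`;
`FDer Ω (some A)` is the focused sequent `⊢ Ω, [A]`. -/
inductive FDer : Multiset Fm → Option Fm → Prop
  | finit {Θ : Multiset Fm} (p : ℕ) :
      (∀ F ∈ Θ, ∃ B, F = Fm.qm Lbl.inf B) →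
      FDer (Fm.natom p ::ₘ Θ) (some (Fm.atom p))
  | ftens {Θ Ω₁ Ω₂ : Multiset Fm} {B C : Fm} :
      (∀ F ∈ Θ, ∃ A, F = Fm.qm Lbl.inf A) →
      (∀ F ∈ Ω₁, F.isNeutral) → (∀ F ∈ Ω₂, F.isNeutral) →
      FDer (Θ + Ω₁) (some B) → FDer (Θ + Ω₂) (some C) →
      FDer (Θ + Ω₁ + Ω₂) (some (Fm.tens B C))
  | fone {Θ : Multiset Fm} :
      (∀ F ∈ Θ, ∃ B, F = Fm.qm Lbl.inf B) → FDer Θ (some Fm.one)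
  | fbang {Γ Δ : Multiset Fm} {u : Lbl} {C : Fm} :
      (∀ F ∈ Γ, ∃ v B, F = Fm.qm v B ∧ Lbl.le u v) →
      (∀ F ∈ Δ, ∃ B, F = Fm.qm Lbl.inf B) →
      FDer (C ::ₘ Γ) none → FDer (Γ + Δ) (some (Fm.bang u C))
  | blur {Ω : Multiset Fm} {N : Fm} :
      N.isNeg → (∀ F ∈ Ω, F.isNeutral) →
      FDer (N ::ₘ Ω) none → FDer Ω (some N)
  | par {Γ : Multiset Fm} {A B : Fm} :
      FDer (A ::ₘ B ::ₘ Γ) none → FDer (Fm.par A B ::ₘ Γ) none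
  | bot {Γ : Multiset Fm} : FDer Γ none → FDer (Fm.bot ::ₘ Γ) none
  | decide {Ω : Multiset Fm} {P : Fm} :
      P.isPos → (∀ F ∈ Ω, F.isNeutral) →
      FDer Ω (some P) → FDer (P ::ₘ Ω) none
  | ldecide {Ω : Multiset Fm} {u : Lbl} {A : Fm} :
      u ≠ Lbl.inf → (∀ F ∈ Ω, F.isNeutral) →
      FDer Ω (some A) → FDer (Fm.qm u A ::ₘ Ω) none
  | udecide {Ω : Multiset Fm} {A : Fm} :
      (∀ F ∈ Ω, F.isNeutral) →
      FDer (Fm.qm Lbl.inf A ::ₘ Ω) (some A) →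
      FDer (Fm.qm Lbl.inf A ::ₘ Ω) none

/-! ## Two-register Minsky machines -/

/-- The instruction set of a two-register Minsky machine. -/
inductive Instr : Type
  | halt | incra | incrb | decra | decrb | isza | iszb
deriving DecidableEq

/-- A configuration `⟨q, v⟩`: a state (states are names by natural numbers,
with `0` the distinguished halting state `*`) together with the values
`v(a)` and `v(b)` of the two registers. -/
structure Cfg : Type where
  q : ℕ
  a : ℕ
  b : ℕ
deriving DecidableEq

/-- A two-register Minsky machine is presented by its finite labelled transition
table: a finite list of (source state, instruction, target state) triples. -/
abbrev Prog : Type := List (ℕ × Instr × ℕ)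

/-- The labelled transition relation between configurations generated by the
table `P`, following the seven schemas (the halting state is `0`). -/
inductive Step (P : Prog) : Cfg → Instr → Cfg → Prop
  | halt {q m n : ℕ} : (q, Instr.halt, 0) ∈ P → q ≠ 0 →
      Step P ⟨q, m, n⟩ Instr.halt ⟨0, 0, 0⟩
  | incra {q r m n : ℕ} : (q, Instr.incra, r) ∈ P → q ≠ r →
      Step P ⟨q, m, n⟩ Instr.incra ⟨r, m + 1, n⟩
  | incrb {q r m n : ℕ} : (q, Instr.incrb, r) ∈ P → q ≠ r →
      Step P ⟨q, m, n⟩ Instr.incrb ⟨r, m, n + 1⟩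
  | decra {q r m n : ℕ} : (q, Instr.decra, r) ∈ P → q ≠ r →
      Step P ⟨q, m + 1, n⟩ Instr.decra ⟨r, m, n⟩
  | decrb {q r m n : ℕ} : (q, Instr.decrb, r) ∈ P → q ≠ r →
      Step P ⟨q, m, n + 1⟩ Instr.decrb ⟨r, m, n⟩
  | isza {q r n : ℕ} : (q, Instr.isza, r) ∈ P → q ≠ r →
      Step P ⟨q, 0, n⟩ Instr.isza ⟨r, 0, n⟩
  | iszb {q r m : ℕ} : (q, Instr.iszb, r) ∈ P → q ≠ r →
      Step P ⟨q, m, 0⟩ Instr.iszb ⟨r, m, 0⟩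

/-- The transition relation is deterministic. -/
def Deterministic (P : Prog) : Prop :=
  ∀ {c : Cfg} {i₁ i₂ : Instr} {d₁ d₂ : Cfg},
    Step P c i₁ d₁ → Step P c i₂ d₂ → i₁ = i₂ ∧ d₁ = d₂

/-- Every entry of the table generates transitions fitting one of the seven
schemas: halt entries target the halting state `0` and have non-halting source,
and the other entries have distinct source and target states. -/
def WellFormed (P : Prog) : Prop :=
  ∀ e ∈ P, (e.2.1 = Instr.halt → e.2.2 = 0 ∧ e.1 ≠ 0) ∧
           (e.2.1 ≠ Instr.halt → e.1 ≠ e.2.2)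

/-- The machine halts from `c₀` if some finite sequence of transitions leads
from `c₀` to the halting configuration `⟨*, {a:0, b:0}⟩`. -/
def Halts (P : Prog) (c₀ : Cfg) : Prop :=
  Relation.ReflTransGen (fun c d => ∃ i, Step P c i d) c₀ ⟨0, 0, 0⟩

/-! ## The encoding -/

/-- The atom `r_a`. -/
def raA : Fm := Fm.atom 0
/-- The atom `r_b`. -/
def rbA : Fm := Fm.atom 1
/-- The atom `h`. -/
def hA : Fm := Fm.atom 2
/-- The negated atom `¬r_a`. -/
def nRa : Fm := Fm.natom 0
/-- The negated atom `¬r_b`. -/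
def nRb : Fm := Fm.natom 1
/-- The negated atom `¬h`. -/
def nH : Fm := Fm.natom 2
/-- The atom for state `q` (distinct from `r_a`, `r_b`, `h`). -/
def stA (q : ℕ) : Fm := Fm.atom (q + 3)
/-- The negated atom `¬q` for state `q`. -/
def nSt (q : ℕ) : Fm := Fm.natom (q + 3)
/-- The formula `?^a ¬r_a`. -/
def qa : Fm := Fm.qm Lbl.la nRa
/-- The formula `?^b ¬r_b`. -/
def qb : Fm := Fm.qm Lbl.lb nRb

/-- The formulas encoding one entry of the transition table. -/
def encInstr : ℕ × Instr × ℕ → Multiset Fm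
  | (q, Instr.halt, _) =>
      {Fm.tens (stA q) nH,
       Fm.tens (Fm.tens hA (Fm.bang Lbl.la raA)) nH,
       Fm.tens (Fm.tens hA (Fm.bang Lbl.lb rbA)) nH,
       Fm.tens hA (Fm.bang Lbl.inf Fm.one)}
  | (q, Instr.incra, r) => {Fm.tens (stA q) (Fm.par (nSt r) qa)}
  | (q, Instr.incrb, r) => {Fm.tens (stA q) (Fm.par (nSt r) qb)}
  | (q, Instr.decra, r) => {Fm.tens (Fm.tens (stA q) (Fm.bang Lbl.la raA)) (nSt r)}
  | (q, Instr.decrb, r) => {Fm.tens (Fm.tens (stA q) (Fm.bang Lbl.lb rbA)) (nSt r)}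
  | (q, Instr.isza, r) => {Fm.tens (stA q) (Fm.bang Lbl.lb (nSt r))}
  | (q, Instr.iszb, r) => {Fm.tens (stA q) (Fm.bang Lbl.la (nSt r))}

/-- The context `Π` encoding the transition relation of the machine `P`. -/
def PiCtx (P : Prog) : Multiset Fm := (P.map encInstr).sum

/-- `?^∞ Γ`: each element of `Γ` prefixed by `?^∞`. -/
def qmInf (Γ : Multiset Fm) : Multiset Fm := Γ.map (Fm.qm Lbl.inf)

/-- The encoding `⟨c⟩` of a configuration: `v(a)` copies of `?^a ¬r_a`,
`v(b)` copies of `?^b ¬r_b`, and `¬q`. -/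
def encCfg (c : Cfg) : Multiset Fm :=
  Multiset.replicate c.a qa + Multiset.replicate c.b qb + {nSt c.q}

/-- The sequent `⊢ ?^∞Π, ⟨c⟩` encoding the halting problem from `c`. -/
def encSeq (P : Prog) (c : Cfg) : Multiset Fm := qmInf (PiCtx P) + encCfg c

/-! ## Concrete Gödel encodings -/

/-- Gödel code of a label. -/
def Lbl.code : Lbl → ℕ
  | .inf => 0 | .la => 1 | .lb => 2

/-- A concrete (effective) Gödel encoding of formulas. -/
def Fm.code : Fm → ℕ
  | .atom p => Nat.pair 0 p
  | .natom p => Nat.pair 1 p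
  | .tens A B => Nat.pair 2 (Nat.pair A.code B.code)
  | .one => Nat.pair 3 0
  | .par A B => Nat.pair 4 (Nat.pair A.code B.code)
  | .bot => Nat.pair 5 0
  | .bang u A => Nat.pair 6 (Nat.pair u.code A.code)
  | .qm u A => Nat.pair 7 (Nat.pair u.code A.code)

/-- Gödel code of a list of natural numbers. -/
def codeList : List ℕ → ℕ
  | [] => 0
  | x :: l => Nat.pair x (codeList l) + 1

/-- A concrete (effective) Gödel encoding of finite multisets of formulas
(a sequent is coded by the sorted list of the codes of its elements). -/
def codeSeq (Γ : Multiset Fm) : ℕ :=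
  codeList ((Γ.map Fm.code).sort (· ≤ ·))

/-- Gödel code of an instruction. -/
def Instr.code : Instr → ℕ
  | .halt => 0 | .incra => 1 | .incrb => 2 | .decra => 3
  | .decrb => 4 | .isza => 5 | .iszb => 6

/-- A concrete (effective) Gödel encoding of machines. -/
def codeProg (P : Prog) : ℕ :=
  codeList (P.map fun e => Nat.pair e.1 (Nat.pair e.2.1.code e.2.2))

/-- A concrete (effective) Gödel encoding of configurations. -/
def codeCfg (c : Cfg) : ℕ := Nat.pair c.q (Nat.pair c.a c.b)


lemma der_eq {Γ Δ : Multiset Fm} (h : Der Γ) (e : Γ = Δ) : Der Δ := e ▸ h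

lemma qmInf_cons (F : Fm) (Θ : Multiset Fm) :
    qmInf (F ::ₘ Θ) = Fm.qm Lbl.inf F ::ₘ qmInf Θ := Multiset.map_cons _ _ _

lemma weak_many (Θ Γ : Multiset Fm) (h : Der Γ) : Der (qmInf Θ + Γ) := by
  induction Θ using Multiset.induction with
  | empty => simpa [qmInf]
  | cons a s ih =>
      rw [qmInf_cons, Multiset.cons_add]
      exact Der.weak ih

lemma der_consume_a :
    Der (Fm.tens hA (Fm.bang Lbl.la raA) ::ₘ ({nH, qa} : Multiset Fm)) := by
  have p1 : Der (hA ::ₘ ({nH} : Multiset Fm)) := Der.init 2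
  have p2 : Der (Fm.bang Lbl.la raA ::ₘ ({qa} : Multiset Fm)) := by
    apply Der.bang
    · intro F hF
      simp only [Multiset.mem_singleton] at hF
      exact ⟨Lbl.la, nRa, hF, Or.inl rfl⟩
    · refine der_eq (Der.qm (u := Lbl.la) (A := nRa) (Γ := {raA}) ?_) ?_
      · exact der_eq (Der.init 0) (by decide)
      · decide
  exact der_eq (Der.tens p1 p2) (by decide)

lemma der_consume_b :
    Der (Fm.tens hA (Fm.bang Lbl.lb rbA) ::ₘ ({nH, qb} : Multiset Fm)) := by
  have p1 : Der (hA ::ₘ ({nH} : Multiset Fm)) := Der.init 2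
  have p2 : Der (Fm.bang Lbl.lb rbA ::ₘ ({qb} : Multiset Fm)) := by
    apply Der.bang
    · intro F hF
      simp only [Multiset.mem_singleton] at hF
      exact ⟨Lbl.lb, nRb, hF, Or.inl rfl⟩
    · refine der_eq (Der.qm (u := Lbl.lb) (A := nRb) (Γ := {rbA}) ?_) ?_
      · exact der_eq (Der.init 1) (by decide)
      · decide
  exact der_eq (Der.tens p1 p2) (by decide)

lemma cleanup_base (Θ : Multiset Fm)
    (h3 : Fm.tens hA (Fm.bang Lbl.inf Fm.one) ∈ Θ) :
    Der (qmInf Θ + {nH}) := by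
  obtain ⟨Θ', rfl⟩ := Multiset.exists_cons_of_mem h3
  rw [qmInf_cons, Multiset.cons_add]
  apply Der.qm
  have p1 : Der (hA ::ₘ ({nH} : Multiset Fm)) := Der.init 2
  have p2 : Der (Fm.bang Lbl.inf Fm.one ::ₘ qmInf Θ') := by
    apply Der.bang
    · intro F hF
      obtain ⟨B, _, rfl⟩ := Multiset.mem_map.1 hF
      exact ⟨Lbl.inf, B, rfl, Or.inl rfl⟩
    · refine der_eq (weak_many Θ' {Fm.one} Der.one) ?_
      rw [← Multiset.singleton_add, add_comm]
  exact der_eq (Der.tens p1 p2) (by rw [add_comm])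

/-- Let `Π` be a finite multiset of MSEL_Σ₂ formulas containing
`h ⊗ !^a r_a ⊗ ¬h`, `h ⊗ !^b r_b ⊗ ¬h` and `h ⊗ !^∞ 1`.  Then for all `m`, `n`,
the sequent `⊢ ?^∞Π, Δ, ¬h` is derivable, where `Δ` consists of `m` copies of
`?^a ¬r_a` and `n` copies of `?^b ¬r_b`. -/
theorem cleanup_derivable (Θ : Multiset Fm)
    (h1 : Fm.tens (Fm.tens hA (Fm.bang Lbl.la raA)) nH ∈ Θ)
    (h2 : Fm.tens (Fm.tens hA (Fm.bang Lbl.lb rbA)) nH ∈ Θ)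
    (h3 : Fm.tens hA (Fm.bang Lbl.inf Fm.one) ∈ Θ) (m n : ℕ) :
    Der (qmInf Θ + (Multiset.replicate m qa + Multiset.replicate n qb + {nH})) := by
  induction m with
  | zero =>
      induction n with
      | zero => simpa using cleanup_base Θ h3
      | succ n ihn =>
          obtain ⟨Θ', e⟩ := Multiset.exists_cons_of_mem h2
          set F := Fm.tens (Fm.tens hA (Fm.bang Lbl.lb rbA)) nH with hF
          have egoal : qmInf Θ + (Multiset.replicate 0 qa +
              Multiset.replicate (n+1) qb + {nH}) =
              Fm.qm Lbl.inf F ::ₘ (qmInf Θ' + (Multiset.replicate 0 qa +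
                Multiset.replicate (n+1) qb + {nH})) := by
            rw [e, qmInf_cons, Multiset.cons_add]
          rw [egoal]
          apply Der.contr
          apply Der.qm
          have ihn' : Der (nH ::ₘ (Fm.qm Lbl.inf F ::ₘ
              (qmInf Θ' + (Multiset.replicate 0 qa + Multiset.replicate n qb)))) := by
            refine der_eq ihn ?_
            rw [e, qmInf_cons]
            simp only [← Multiset.singleton_add, Multiset.replicate_succ]
            abel
          have t := Der.tens der_consume_b ihn'
          refine der_eq t ?_
          simp only [← Multiset.singleton_add, Multiset.replicate_succ, Multiset.insert_eq_cons]
          abel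
  | succ m ihm =>
      obtain ⟨Θ', e⟩ := Multiset.exists_cons_of_mem h1
      set F := Fm.tens (Fm.tens hA (Fm.bang Lbl.la raA)) nH with hF
      have egoal : qmInf Θ + (Multiset.replicate (m+1) qa +
          Multiset.replicate n qb + {nH}) =
          Fm.qm Lbl.inf F ::ₘ (qmInf Θ' + (Multiset.replicate (m+1) qa +
            Multiset.replicate n qb + {nH})) := by
        rw [e, qmInf_cons, Multiset.cons_add]
      rw [egoal]
      apply Der.contr
      apply Der.qm
      have ihm' : Der (nH ::ₘ (Fm.qm Lbl.inf F ::ₘ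
          (qmInf Θ' + (Multiset.replicate m qa + Multiset.replicate n qb)))) := by
        refine der_eq ihm ?_
        rw [e, qmInf_cons]
        simp only [← Multiset.singleton_add, Multiset.replicate_succ]
        abel
      have t := Der.tens der_consume_a ihm'
      refine der_eq t ?_
      simp only [← Multiset.singleton_add, Multiset.replicate_succ, Multiset.insert_eq_cons]
      abel

end Msel
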